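/- Leray support-function inequality for the (n−q)-convex model domain (inequality (3.13)): Let n ≥ 1, 1 ≤ q ≤ n, and λ₁, …, λ_{q−1} ∈ [−1, 1]. Let R : ℂⁿ → ℝ be a C² function whose value, first derivative and second derivative all vanish at the origin. Define ρ(z) = −Im z_n + Σ_{j=1}^{q−1} λ_j |z_j|² + Σ_{j=q}^{n} |z_j|² + R(z), and for z, ζ ∈ ℂⁿ define g_j(z, ζ) = (∂ρ/∂ζ_j)(ζ) + (conj ζ_j − conj z_j) for 1 ≤ j ≤ q−1 and g_j(z, ζ) = (∂ρ/∂ζ_j)(ζ) for q ≤ j ≤ n. Then there is a neighborhood U of 0 in ℂⁿ such that for all ζ, z ∈ U: 2 Re ( Σ_{j=1}^{n} g_j(z, ζ) (ζ_j − z_j) ) ≥ ρ(ζ) − ρ(z) + (1/2) |ζ − z|². -/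

import Mathlib

/-!
The function `ρ - R` is a real quadratic polynomial, so its first-order Taylor remainder at `ζ`
is exactly `∑ c_j |z_j - ζ_j|²` with `c_j = λ_j` for `j < q` and `c_j = 1` otherwise.  Since
`2 Re ∑ (∂ρ/∂ζ_j)(ζ) w_j = Dρ(ζ) w`, the left side of (3.13) is `Dρ(ζ)(ζ - z)` plus
`2 ∑_{j<q} |ζ_j - z_j|²`, which raises every weight to `c_j + 2 ≥ 1`.  Finally the Hessian of `R`
vanishes at `0`, so near `0` it has norm at most `1/2`, and the mean value inequality applied to
`DR` bounds the Taylor remainder of `R` by `½ |ζ - z|²`.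
-/

open Complex Finset Metric

noncomputable def wderiv (n : ℕ) (ρ : EuclideanSpace ℂ (Fin n) → ℝ)
    (ζ : EuclideanSpace ℂ (Fin n)) (j : Fin n) : ℂ :=
  (1 / 2 : ℂ) *
    ((fderiv ℝ ρ ζ (EuclideanSpace.single j 1) : ℂ) -
      Complex.I * (fderiv ℝ ρ ζ (EuclideanSpace.single j Complex.I) : ℂ))

section Taylor

variable {E F : Type*} [NormedAddCommGroup E] [NormedSpace ℝ E] [NormedAddCommGroup F]
  [NormedSpace ℝ F] {f : E → F}

theorem Convex.norm_image_sub_sub_fderiv_le {s : Set E} {C : ℝ} {x y : E}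
    (hf : ∀ w ∈ s, DifferentiableAt ℝ f w) (hf' : ∀ w ∈ s, DifferentiableAt ℝ (fderiv ℝ f) w)
    (bound : ∀ w ∈ s, ‖fderiv ℝ (fderiv ℝ f) w‖ ≤ C) (hs : Convex ℝ s) (xs : x ∈ s)
    (ys : y ∈ s) : ‖f y - f x - fderiv ℝ f x (y - x)‖ ≤ C * ‖y - x‖ ^ 2 := by
  have hC : 0 ≤ C := (norm_nonneg (fderiv ℝ (fderiv ℝ f) x)).trans (bound x xs)
  have hseg : segment ℝ x y ⊆ s := hs.segment_subset xs ys
  have hLip : ∀ w ∈ segment ℝ x y, ‖fderiv ℝ f w - fderiv ℝ f x‖ ≤ C * ‖y - x‖ := fun w hw =>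
    (hs.norm_image_sub_le_of_norm_fderiv_le hf' bound xs (hseg hw)).trans
      (mul_le_mul_of_nonneg_left (norm_sub_le_of_mem_segment hw) hC)
  calc ‖f y - f x - fderiv ℝ f x (y - x)‖ ≤ C * ‖y - x‖ * ‖y - x‖ :=
        (convex_segment x y).norm_image_sub_le_of_norm_fderiv_le' (fun w hw => hf w (hseg hw))
          hLip (left_mem_segment ℝ x y) (right_mem_segment ℝ x y)
    _ = C * ‖y - x‖ ^ 2 := by ring

theorem ContDiff.exists_mem_nhds_norm_image_sub_sub_fderiv_le (hf : ContDiff ℝ 2 f) {x₀ : E}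
    (hf₂ : iteratedFDeriv ℝ 2 f x₀ = 0) {ε : ℝ} (hε : 0 < ε) :
    ∃ U ∈ nhds x₀, ∀ x ∈ U, ∀ y ∈ U, ‖f y - f x - fderiv ℝ f x (y - x)‖ ≤ ε * ‖y - x‖ ^ 2 := by
  have hf₁ : ContDiff ℝ 1 (fderiv ℝ f) := hf.fderiv_right le_rfl
  have hnorm : ∀ x, ‖fderiv ℝ (fderiv ℝ f) x‖ = ‖iteratedFDeriv ℝ 2 f x‖ := fun x => by
    rw [← norm_iteratedFDeriv_one, norm_iteratedFDeriv_fderiv]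
  have hsmall : ∀ᶠ x in nhds x₀, ‖iteratedFDeriv ℝ 2 f x‖ < ε :=
    (hf.continuous_iteratedFDeriv le_rfl).norm.continuousAt.eventually_lt continuousAt_const
      (by simpa [hf₂] using hε)
  obtain ⟨r, hr, hball⟩ := eventually_nhds_iff_ball.mp hsmall
  refine ⟨ball x₀ r, ball_mem_nhds x₀ hr, fun x hx y hy => ?_⟩
  exact (convex_ball x₀ r).norm_image_sub_sub_fderiv_le
    (fun w _ => (hf.differentiable two_ne_zero).differentiableAt)
    (fun w _ => (hf₁.differentiable one_ne_zero).differentiableAt)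
    (fun w hw => (hnorm w).trans_le (hball w hw).le) hx hy

end Taylor

theorem EuclideanSpace.sum_re_smul_single_one_add_im_smul_single_I {ι : Type*} [Fintype ι]
    [DecidableEq ι] (w : EuclideanSpace ℂ ι) :
    ∑ j, ((w j).re • EuclideanSpace.single j (1 : ℂ) + (w j).im • EuclideanSpace.single j I) =
      w := by
  ext i
  simp [Complex.real_smul, Pi.single_apply, ite_add_ite, Complex.re_add_im]

theorem two_mul_re_sum_wderiv_mul {n : ℕ} (f : EuclideanSpace ℂ (Fin n) → ℝ)
    (ζ w : EuclideanSpace ℂ (Fin n)) :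
    2 * (∑ j, wderiv n f ζ j * w j).re = fderiv ℝ f ζ w := by
  conv_rhs => rw [← EuclideanSpace.sum_re_smul_single_one_add_im_smul_single_I w]
  simp only [map_sum, map_add, map_smul, re_sum, mul_sum, smul_eq_mul]
  refine sum_congr rfl fun j _ => ?_
  simp only [wderiv, mul_re, sub_re, sub_im, ofReal_re, ofReal_im, I_re, I_im, div_ofNat_re,
    div_ofNat_im, one_re, one_im, mul_im]
  ring

section ModelDomain

variable {ι : Type*} [Fintype ι]

theorem hasFDerivAt_sum_mul_norm_sq (c : ι → ℝ) (x : EuclideanSpace ℂ ι) :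
    HasFDerivAt (fun w : EuclideanSpace ℂ ι => ∑ j, c j * ‖w j‖ ^ 2)
      (∑ j, c j • (2 • (innerSL ℝ (x j)).comp (PiLp.proj 2 (fun _ : ι => ℂ) j))) x :=
  HasFDerivAt.fun_sum fun j _ =>
    ((PiLp.proj 2 (fun _ : ι => ℂ) j : EuclideanSpace ℂ ι →L[ℝ] ℂ).hasFDerivAt.norm_sq).const_mul
      (c j)

theorem sub_sub_fderiv_eq_sum_mul_norm_sq_add (ℓ : EuclideanSpace ℂ ι →L[ℝ] ℝ) (c : ι → ℝ)
    {R ρ : EuclideanSpace ℂ ι → ℝ} {x : EuclideanSpace ℂ ι} (hR : DifferentiableAt ℝ R x)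
    (hρ : ∀ w, ρ w = ℓ w + ∑ j, c j * ‖w j‖ ^ 2 + R w) (y : EuclideanSpace ℂ ι) :
    ρ y - ρ x - fderiv ℝ ρ x (y - x) =
      ∑ j, c j * ‖y j - x j‖ ^ 2 + (R y - R x - fderiv ℝ R x (y - x)) := by
  have hρ' : HasFDerivAt ρ
      (ℓ + ∑ j, c j • (2 • (innerSL ℝ (x j)).comp (PiLp.proj 2 (fun _ : ι => ℂ) j))
        + fderiv ℝ R x) x := by
    rw [show ρ = _ from funext hρ]
    exact (ℓ.hasFDerivAt.add (hasFDerivAt_sum_mul_norm_sq c x)).add hR.hasFDerivAt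
  have hD : fderiv ℝ ρ x (y - x) =
      ℓ (y - x) + ∑ j, c j * (2 * inner ℝ (x j) (y j - x j)) + fderiv ℝ R x (y - x) := by
    simp only [hρ'.fderiv, add_apply, _root_.sum_apply, smul_apply,
      ContinuousLinearMap.comp_apply, innerSL_apply_apply, PiLp.proj_apply, PiLp.sub_apply,
      smul_eq_mul, nsmul_eq_mul, Nat.cast_ofNat]
  have hQ : ∑ j, c j * ‖y j‖ ^ 2 = ∑ j, c j * ‖x j‖ ^ 2 +
      ∑ j, c j * (2 * inner ℝ (x j) (y j - x j)) + ∑ j, c j * ‖y j - x j‖ ^ 2 := by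
    simp only [← sum_add_distrib, ← mul_add]
    exact sum_congr rfl fun j _ => by rw [← norm_add_sq_real, add_sub_cancel]
  rw [hD, hρ y, hρ x, map_sub]
  linear_combination hQ

theorem norm_sub_sq_le_sum_ite_mul_add {p : ι → Prop} [DecidablePred p] {lam : ι → ℝ}
    (hlam : ∀ j, p j → |lam j| ≤ 1) (x y : EuclideanSpace ℂ ι) :
    ‖y - x‖ ^ 2 ≤ ∑ j, (if p j then lam j else 1) * ‖y j - x j‖ ^ 2 +
      2 * ∑ j, (if p j then ‖y j - x j‖ ^ 2 else 0) := by
  rw [EuclideanSpace.norm_sq_eq, mul_sum, ← sum_add_distrib]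
  simp only [PiLp.sub_apply]
  refine sum_le_sum fun j _ => ?_
  split_ifs with hj
  · nlinarith [(abs_le.mp (hlam j hj)).1, sq_nonneg ‖y j - x j‖]
  · simp

end ModelDomain

theorem two_mul_re_sum_ite_wderiv_add_conj_mul {n : ℕ} (f : EuclideanSpace ℂ (Fin n) → ℝ)
    (p : Fin n → Prop) [DecidablePred p] (z ζ : EuclideanSpace ℂ (Fin n)) :
    2 * (∑ j, (if p j then wderiv n f ζ j + (starRingEnd ℂ (ζ j) - starRingEnd ℂ (z j))
        else wderiv n f ζ j) * (ζ j - z j)).re =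
      fderiv ℝ f ζ (ζ - z) + 2 * ∑ j, (if p j then ‖ζ j - z j‖ ^ 2 else 0) := by
  have hterm : ∀ j, (if p j then wderiv n f ζ j + (starRingEnd ℂ (ζ j) - starRingEnd ℂ (z j))
        else wderiv n f ζ j) * (ζ j - z j) =
      wderiv n f ζ j * (ζ - z) j + ((if p j then ‖ζ j - z j‖ ^ 2 else 0 : ℝ) : ℂ) := by
    intro j
    split_ifs
    · rw [← map_sub, add_mul, conj_mul', PiLp.sub_apply]
      push_cast
      ring
    · simp
  simp only [hterm, sum_add_distrib, add_re, ← ofReal_sum, ofReal_re, mul_add,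
    two_mul_re_sum_wderiv_mul]

/-- Coordinates are 0-indexed: `1 ≤ j ≤ q-1` becomes `(j : ℕ) < q - 1`, and `z_n` is the
coordinate `n - 1`. -/
theorem stmt4_general (n q : ℕ) (hn : 1 ≤ n)
    (lam : Fin n → ℝ) (hlam : ∀ j : Fin n, (j : ℕ) < q - 1 → |lam j| ≤ 1)
    (R : EuclideanSpace ℂ (Fin n) → ℝ) (hR : ContDiff ℝ 2 R)
    (hR2 : iteratedFDeriv ℝ 2 R 0 = 0)
    (ρ : EuclideanSpace ℂ (Fin n) → ℝ)
    (hρ : ∀ z, ρ z = -(z ⟨n - 1, Nat.sub_lt hn Nat.one_pos⟩).im +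
        ∑ j : Fin n, (if (j : ℕ) < q - 1 then lam j else 1) * ‖z j‖ ^ 2 + R z)
    (g : EuclideanSpace ℂ (Fin n) → EuclideanSpace ℂ (Fin n) → Fin n → ℂ)
    (hg : ∀ z ζ j, g z ζ j =
        if (j : ℕ) < q - 1 then wderiv n ρ ζ j + (starRingEnd ℂ (ζ j) - starRingEnd ℂ (z j))
        else wderiv n ρ ζ j) :
    ∃ U ∈ nhds (0 : EuclideanSpace ℂ (Fin n)), ∀ ζ ∈ U, ∀ z ∈ U,
      ρ ζ - ρ z + (1 / 2) * ‖ζ - z‖ ^ 2 ≤ 2 * (∑ j, g z ζ j * (ζ j - z j)).re := by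
  obtain ⟨U, hU, hRU⟩ := hR.exists_mem_nhds_norm_image_sub_sub_fderiv_le hR2 one_half_pos
  refine ⟨U, hU, fun ζ hζ z hz => ?_⟩
  have hexpand := sub_sub_fderiv_eq_sum_mul_norm_sq_add
    (-(imCLM.comp (PiLp.proj 2 (fun _ : Fin n => ℂ) ⟨n - 1, Nat.sub_lt hn Nat.one_pos⟩)))
    (fun j => if (j : ℕ) < q - 1 then lam j else 1)
    ((hR.differentiable two_ne_zero).differentiableAt (x := ζ)) (ρ := ρ)
    (fun w => by rw [hρ]; rfl) z
  have hremainder := neg_le_of_abs_le (hRU ζ hζ z hz)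
  have hweights := norm_sub_sq_le_sum_ite_mul_add hlam ζ z
  simp only [hg, two_mul_re_sum_ite_wderiv_add_conj_mul]
  rw [← neg_sub z ζ, map_neg, norm_neg]
  simp only [norm_sub_rev (ζ _)] at hweights ⊢
  linarith

/-- Leray support-function inequality for the `(n-q)`-convex model domain
(inequality (3.13)).  Coordinates are 0-indexed: the index `j` with `1 ≤ j ≤ q-1`
(1-indexed) corresponds to `(j : ℕ) < q - 1`, and `z_n` is the coordinate `n - 1`. -/
theorem stmt4 (n q : ℕ) (hn : 1 ≤ n) (hq1 : 1 ≤ q) (hqn : q ≤ n)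
    (lam : Fin n → ℝ) (hlam : ∀ j : Fin n, (j : ℕ) < q - 1 → |lam j| ≤ 1)
    (R : EuclideanSpace ℂ (Fin n) → ℝ) (hR : ContDiff ℝ 2 R)
    (hR0 : R 0 = 0) (hR1 : fderiv ℝ R 0 = 0) (hR2 : iteratedFDeriv ℝ 2 R 0 = 0)
    (ρ : EuclideanSpace ℂ (Fin n) → ℝ)
    (hρ : ∀ z, ρ z = -(z ⟨n - 1, Nat.sub_lt hn Nat.one_pos⟩).im +
        ∑ j : Fin n, (if (j : ℕ) < q - 1 then lam j else 1) * ‖z j‖ ^ 2 + R z)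
    (g : EuclideanSpace ℂ (Fin n) → EuclideanSpace ℂ (Fin n) → Fin n → ℂ)
    (hg : ∀ z ζ j, g z ζ j =
        if (j : ℕ) < q - 1 then wderiv n ρ ζ j + (starRingEnd ℂ (ζ j) - starRingEnd ℂ (z j))
        else wderiv n ρ ζ j) :
    ∃ U ∈ nhds (0 : EuclideanSpace ℂ (Fin n)), ∀ ζ ∈ U, ∀ z ∈ U,
      ρ ζ - ρ z + (1 / 2) * ‖ζ - z‖ ^ 2 ≤ 2 * (∑ j, g z ζ j * (ζ j - z j)).re :=
  stmt4_general n q hn lam hlam R hR hR2 ρ hρ g hg
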